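/- Let M_n = arcsinh(1) - √2 Σ_{k=0}^{n-1} [(-1)^k/(k+1)] Σ_{m=0}^{⌊k/2⌋} (2m choose m)(-1/4)^m. Then lim_{n→∞} M_n = 0. -/

import Mathlib

open Real Filter

noncomputable def Mdiag (n : ℕ) : ℝ :=
  Real.arsinh 1 -
    Real.sqrt 2 * ∑ k ∈ Finset.range n,
      ((-1 : ℝ) ^ k / (k + 1)) *
        ∑ m ∈ Finset.range (k / 2 + 1), (Nat.choose (2 * m) m : ℝ) * (-1 / 4) ^ m

/-!
Write `b m = C(2m, m) / 4 ^ m` and `S k = Mdiag.innerSum k`; the `S k` are partial sums of the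
binomial series `1 / √(1 + x²) = ∑ (-1) ^ m b m x ^ (2m)` at `x = 1`. Since
`(-1) ^ k / (k + 1) = ∫₀¹ (-x) ^ k` and `arsinh 1 = √2 ∫₀¹ dx / ((1 + x) √(1 + x²))`
(an antiderivative is `-arsinh ((1 - x) / (1 + x))`),
`Mdiag N = √2 ∫₀¹ (1 / ((1 + x) √(1 + x²)) - ∑_{k<N} (-x) ^ k S k)`.
Exchanging the two sums leaves geometric sums in `k`: with `K = ⌈N / 2⌉` and `P_K` the `K`-th
partial sum of the binomial series, `(1 + x) ∑_{k<N} (-x) ^ k S k = P_K(x) - (-x) ^ N P_K(1)`.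
The series is alternating with decreasing terms, so `|1 / √(1 + x²) - P_K(x)| ≤ b K` and
`0 ≤ P_K(1) ≤ 1`. Hence `|Mdiag N| ≤ √2 (b K + 1 / (N + 1))`, which tends to `0` because
`b m ^ 2 ≤ 1 / (2m + 1)`.
-/

open Finset Topology intervalIntegral

noncomputable def scaledCentralBinom (m : ℕ) : ℝ := Nat.centralBinom m / 4 ^ m

@[simp] lemma scaledCentralBinom_zero : scaledCentralBinom 0 = 1 := by simp [scaledCentralBinom]

lemma scaledCentralBinom_succ (m : ℕ) :
    scaledCentralBinom (m + 1) = scaledCentralBinom m * ((2 * m + 1) / (2 * m + 2)) := by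
  have h : ((m + 1 : ℕ) : ℝ) * Nat.centralBinom (m + 1) = 2 * (2 * m + 1) * Nat.centralBinom m := by
    exact_mod_cast Nat.succ_mul_centralBinom_succ m
  unfold scaledCentralBinom
  push_cast at h
  field_simp
  rw [pow_succ]
  linear_combination 2 * 4 ^ m * h

lemma scaledCentralBinom_nonneg (m : ℕ) : 0 ≤ scaledCentralBinom m := by
  unfold scaledCentralBinom; positivity

lemma antitone_scaledCentralBinom : Antitone scaledCentralBinom := by
  refine antitone_nat_of_succ_le fun m => ?_
  rw [scaledCentralBinom_succ]
  exact mul_le_of_le_one_right (scaledCentralBinom_nonneg m)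
    ((div_le_one (by positivity)).2 (by linarith))

lemma scaledCentralBinom_sq_mul_le_one (m : ℕ) : scaledCentralBinom m ^ 2 * (2 * m + 1) ≤ 1 := by
  induction m with
  | zero => simp
  | succ m ih =>
    have key : ((2 * m + 1) / (2 * m + 2)) ^ 2 * (2 * (m + 1 : ℕ) + 1 : ℝ) ≤ 2 * m + 1 := by
      push_cast
      rw [div_pow, div_mul_eq_mul_div, div_le_iff₀ (by positivity)]
      nlinarith
    calc scaledCentralBinom (m + 1) ^ 2 * (2 * (m + 1 : ℕ) + 1)
        = scaledCentralBinom m ^ 2 * (((2 * m + 1) / (2 * m + 2)) ^ 2 * (2 * (m + 1 : ℕ) + 1)) := by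
          rw [scaledCentralBinom_succ]; ring
      _ ≤ scaledCentralBinom m ^ 2 * (2 * m + 1) := by gcongr
      _ ≤ 1 := ih

lemma tendsto_scaledCentralBinom_atTop_zero : Tendsto scaledCentralBinom atTop (𝓝 0) := by
  have hbound (m : ℕ) : scaledCentralBinom m ≤ (√(2 * m + 1))⁻¹ := by
    rw [← sqrt_inv, le_sqrt (scaledCentralBinom_nonneg m) (by positivity), ← one_div,
      le_div_iff₀ (by positivity)]
    exact scaledCentralBinom_sq_mul_le_one m
  refine squeeze_zero scaledCentralBinom_nonneg hbound ?_
  have : Tendsto (fun m : ℕ => 2 * (m : ℝ) + 1) atTop atTop :=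
    tendsto_atTop_add_const_right _ _ (tendsto_natCast_atTop_atTop.const_mul_atTop two_pos)
  exact (tendsto_sqrt_atTop.comp this).inv_tendsto_atTop

lemma multichoose_one_half_eq_scaledCentralBinom (m : ℕ) :
    Ring.multichoose (1 / 2 : ℝ) m = scaledCentralBinom m := by
  induction m with
  | zero => simp
  | succ m ih =>
    have h := Ring.factorial_nsmul_multichoose_eq_ascPochhammer (1 / 2 : ℝ) (m + 1)
    have h' := Ring.factorial_nsmul_multichoose_eq_ascPochhammer (1 / 2 : ℝ) m
    rw [ascPochhammer_succ_right, Polynomial.smeval_mul, ← h', ih] at h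
    simp only [Polynomial.smeval_add, Polynomial.smeval_X, Polynomial.smeval_natCast, nsmul_eq_mul,
      Nat.factorial_succ, Nat.cast_mul, pow_one, pow_zero, Nat.cast_succ] at h
    rw [scaledCentralBinom_succ]
    apply mul_left_cancel₀ (by positivity : ((m : ℝ) + 1) * m.factorial ≠ 0)
    rw [h]
    field_simp
    ring

lemma hasSum_inv_sqrt_one_add_sq {x : ℝ} (hx : |x| < 1) :
    HasSum (fun m => (-1) ^ m * (scaledCentralBinom m * x ^ (2 * m))) (√(1 + x ^ 2))⁻¹ := by
  have hy : -x ^ 2 ∈ Metric.eball (0 : ℝ) 1 := by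
    rw [Metric.mem_eball, edist_zero_right, enorm_neg, ← ofReal_norm]
    simpa using hx
  have h := (one_div_one_sub_rpow_hasFPowerSeriesOnBall_zero (1 / 2)).hasSum hy
  rw [FormalMultilinearSeries.ofScalars_apply_eq'] at h
  have hterm : (fun n : ℕ => Ring.choose (1 / 2 + (n : ℝ) - 1) n • (-x ^ 2) ^ n)
      = fun m => (-1) ^ m * (scaledCentralBinom m * x ^ (2 * m)) := by
    ext m
    rw [← Ring.multichoose_eq, multichoose_one_half_eq_scaledCentralBinom, smul_eq_mul, neg_pow,
      pow_mul]
    ring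
  rwa [hterm, zero_add, sub_neg_eq_add, ← sqrt_eq_rpow, one_div] at h

lemma sum_range_alternating_mem_Icc {E : Type*} [Ring E] [PartialOrder E] [IsOrderedRing E]
    {f : ℕ → E} (hf : Antitone f) (hf0 : ∀ n, 0 ≤ f n) (n : ℕ) :
    ∑ i ∈ range n, (-1) ^ i * f i ∈ Set.Icc 0 (f 0) := by
  induction n generalizing f with
  | zero => exact ⟨le_rfl, hf0 0⟩
  | succ n ih =>
    obtain ⟨h0, h1⟩ := ih (f := fun i => f (i + 1)) (fun a b hab => hf (by omega)) (fun i => hf0 _)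
    have hsplit : ∑ i ∈ range (n + 1), (-1) ^ i * f i
        = f 0 - ∑ i ∈ range n, (-1) ^ i * f (i + 1) := by
      simp only [sum_range_succ', pow_succ, pow_zero, one_mul, mul_neg_one, neg_mul,
        sum_neg_distrib]
      abel
    rw [hsplit]
    exact ⟨sub_nonneg.2 (h1.trans (hf (Nat.zero_le 1))), sub_le_self _ h0⟩

lemma abs_inv_sqrt_one_add_sq_sub_sum_le {x : ℝ} (hx : |x| < 1) (K : ℕ) :
    |(√(1 + x ^ 2))⁻¹ - ∑ m ∈ range K, (-1) ^ m * (scaledCentralBinom m * x ^ (2 * m))|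
      ≤ scaledCentralBinom K := by
  set f : ℕ → ℝ := fun m => scaledCentralBinom m * x ^ (2 * m)
  have hx2 : x ^ 2 ≤ 1 := ((sq_lt_one_iff_abs_lt_one x).2 hx).le
  have hf0 (m : ℕ) : 0 ≤ f m := by
    have := scaledCentralBinom_nonneg m; simp only [f, pow_mul]; positivity
  have hfa : Antitone f := fun a b hab => by
    simp only [f, pow_mul]
    exact mul_le_mul (antitone_scaledCentralBinom hab)
      (pow_le_pow_of_le_one (sq_nonneg x) hx2 hab) (by positivity) (scaledCentralBinom_nonneg a)
  have hsum := hasSum_inv_sqrt_one_add_sq hx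
  have hfs : Summable f := by
    refine hsum.summable.abs.congr fun m => ?_
    rw [abs_mul, abs_pow, abs_neg, abs_one, one_pow, one_mul]
    exact abs_of_nonneg (hf0 m)
  calc _ ≤ f K := hsum.tsum_eq ▸ alternating_series_error_bound f hfa hfs K
    _ ≤ scaledCentralBinom K := by
      simp only [f, pow_mul]
      exact mul_le_of_le_one_right (scaledCentralBinom_nonneg K) (pow_le_one₀ (sq_nonneg x) hx2)

lemma one_add_mul_sum_neg_pow_mul_sum_half {R : Type*} [CommRing R] (c : ℕ → R) (x : R)
    (N : ℕ) :
    (1 + x) * ∑ k ∈ range N, (-x) ^ k * ∑ m ∈ range (k / 2 + 1), c m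
      = ∑ m ∈ range ((N + 1) / 2), c m * x ^ (2 * m)
        - (-x) ^ N * ∑ m ∈ range ((N + 1) / 2), c m := by
  induction N with
  | zero => simp
  | succ N ih =>
    rw [sum_range_succ, mul_add, ih]
    obtain ⟨j, rfl | rfl⟩ := Nat.even_or_odd' N
    · have h1 : (2 * j + 1) / 2 = j := by omega
      have h2 : (2 * j + 1 + 1) / 2 = j + 1 := by omega
      have h3 : 2 * j / 2 = j := by omega
      rw [h1, h2, h3, sum_range_succ, sum_range_succ]
      simp only [pow_succ, (even_two_mul j).neg_pow]
      ring
    · have h1 : (2 * j + 1 + 1) / 2 = j + 1 := by omega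
      have h2 : (2 * j + 1 + 1 + 1) / 2 = j + 1 := by omega
      have h3 : (2 * j + 1) / 2 = j := by omega
      rw [h1, h2, h3]
      simp only [pow_succ, (even_two_mul j).neg_pow]
      ring

lemma integral_neg_pow (k : ℕ) : ∫ x in (0 : ℝ)..1, (-x) ^ k = (-1) ^ k / (k + 1) := by
  rw [funext fun x : ℝ => neg_pow x k, integral_const_mul, integral_pow]
  simp [div_eq_mul_inv]

lemma hasDerivAt_neg_arsinh_one_sub_div_one_add {x : ℝ} (hx : -1 < x) :
    HasDerivAt (fun y => -arsinh ((1 - y) / (1 + y))) (√2 * ((1 + x) * √(1 + x ^ 2))⁻¹) x := by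
  have h1x : 0 < 1 + x := by linarith
  have hquot : HasDerivAt (fun y : ℝ => (1 - y) / (1 + y)) (-2 / (1 + x) ^ 2) x := by
    refine (((hasDerivAt_id' x).const_sub 1).div ((hasDerivAt_id' x).const_add 1)
      h1x.ne').congr_deriv ?_
    field_simp
    ring
  refine ((hasDerivAt_arsinh _).comp x hquot).neg.congr_deriv ?_
  have hsqrt : √(1 + ((1 - x) / (1 + x)) ^ 2) = √2 * √(1 + x ^ 2) / (1 + x) := by
    rw [show 1 + ((1 - x) / (1 + x)) ^ 2 = 2 * (1 + x ^ 2) / (1 + x) ^ 2 by field_simp; ring,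
      sqrt_div' _ (sq_nonneg _), sqrt_sq h1x.le, sqrt_mul zero_le_two]
  have h2 : √2 * √2 = 2 := mul_self_sqrt zero_le_two
  have : 0 < √(1 + x ^ 2) := sqrt_pos.2 (by positivity)
  rw [hsqrt]
  field_simp
  linear_combination -h2

lemma intervalIntegrable_inv_one_add_mul_sqrt :
    IntervalIntegrable (fun x : ℝ => ((1 + x) * √(1 + x ^ 2))⁻¹) MeasureTheory.volume 0 1 := by
  refine (ContinuousOn.inv₀ (by fun_prop) fun x hx => ?_).intervalIntegrable
  rw [Set.uIcc_of_le zero_le_one] at hx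
  have hx0 : 0 ≤ x := hx.1
  have : 0 < √(1 + x ^ 2) := sqrt_pos.2 (by positivity)
  positivity

lemma integral_sqrt_two_mul_inv_one_add_mul_sqrt :
    ∫ x in (0 : ℝ)..1, √2 * ((1 + x) * √(1 + x ^ 2))⁻¹ = arsinh 1 := by
  have hderiv : ∀ x ∈ Set.uIcc (0 : ℝ) 1,
      HasDerivAt (fun y => -arsinh ((1 - y) / (1 + y))) (√2 * ((1 + x) * √(1 + x ^ 2))⁻¹) x :=
    fun x hx => hasDerivAt_neg_arsinh_one_sub_div_one_add (by
      rw [Set.uIcc_of_le zero_le_one] at hx; linarith [hx.1])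
  rw [integral_eq_sub_of_hasDerivAt hderiv]
  · norm_num
  · exact intervalIntegrable_inv_one_add_mul_sqrt.const_mul _

noncomputable def Mdiag.innerSum (k : ℕ) : ℝ :=
  ∑ m ∈ range (k / 2 + 1), (Nat.choose (2 * m) m : ℝ) * (-1 / 4) ^ m

lemma choose_two_mul_mul_neg_quarter_pow (m : ℕ) :
    (Nat.choose (2 * m) m : ℝ) * (-1 / 4) ^ m = (-1) ^ m * scaledCentralBinom m := by
  rw [scaledCentralBinom, Nat.centralBinom_eq_two_mul_choose, div_pow, div_eq_mul_inv,
    div_eq_mul_inv]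
  ring

lemma abs_inv_one_add_mul_sqrt_sub_sum_le {x : ℝ} (hx0 : 0 ≤ x) (hx1 : x < 1) (N : ℕ) :
    |((1 + x) * √(1 + x ^ 2))⁻¹ - ∑ k ∈ range N, (-x) ^ k * Mdiag.innerSum k|
      ≤ scaledCentralBinom ((N + 1) / 2) + x ^ N := by
  set K := (N + 1) / 2
  set P := ∑ m ∈ range K, (-1) ^ m * (scaledCentralBinom m * x ^ (2 * m))
  set Q := ∑ m ∈ range K, (-1) ^ m * scaledCentralBinom m
  have h1x : 0 < 1 + x := by linarith
  have hsum : ∑ k ∈ range N, (-x) ^ k * Mdiag.innerSum k = (P - (-x) ^ N * Q) / (1 + x) := by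
    unfold Mdiag.innerSum
    rw [eq_div_iff h1x.ne', mul_comm, one_add_mul_sum_neg_pow_mul_sum_half]
    simp only [choose_two_mul_mul_neg_quarter_pow, P, Q, K, mul_assoc]
  have hP : |(√(1 + x ^ 2))⁻¹ - P| ≤ scaledCentralBinom K :=
    abs_inv_sqrt_one_add_sq_sub_sum_le (by rwa [abs_of_nonneg hx0]) K
  have hQ : |Q| ≤ 1 := by
    obtain ⟨h0, h1⟩ := sum_range_alternating_mem_Icc antitone_scaledCentralBinom
      scaledCentralBinom_nonneg K
    rw [scaledCentralBinom_zero] at h1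
    exact abs_le.2 ⟨by linarith, h1⟩
  have hxN : |(-x) ^ N| = x ^ N := by rw [abs_pow, abs_neg, abs_of_nonneg hx0]
  have hsplit : ((1 + x) * √(1 + x ^ 2))⁻¹ - (P - (-x) ^ N * Q) / (1 + x)
      = ((√(1 + x ^ 2))⁻¹ - P + (-x) ^ N * Q) / (1 + x) := by
    rw [mul_inv]; ring
  rw [hsum, hsplit, abs_div, abs_of_pos h1x]
  calc _ ≤ |(√(1 + x ^ 2))⁻¹ - P + (-x) ^ N * Q| := div_le_self (abs_nonneg _) (by linarith)
    _ ≤ |(√(1 + x ^ 2))⁻¹ - P| + |(-x) ^ N| * |Q| := by rw [← abs_mul]; exact abs_add_le _ _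
    _ ≤ scaledCentralBinom K + x ^ N * 1 := by rw [hxN]; gcongr
    _ = _ := by rw [mul_one]

lemma Mdiag_eq_integral (N : ℕ) :
    Mdiag N = √2 * ∫ x in (0 : ℝ)..1,
      (((1 + x) * √(1 + x ^ 2))⁻¹ - ∑ k ∈ range N, (-x) ^ k * Mdiag.innerSum k) := by
  have hsum : ∫ x in (0 : ℝ)..1, ∑ k ∈ range N, (-x) ^ k * Mdiag.innerSum k
      = ∑ k ∈ range N, ((-1 : ℝ) ^ k / (k + 1)) * Mdiag.innerSum k := by
    rw [integral_finsetSum fun k _ => Continuous.intervalIntegrable (by fun_prop) _ _]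
    simp only [integral_mul_const, integral_neg_pow]
  rw [integral_sub intervalIntegrable_inv_one_add_mul_sqrt
      (Continuous.intervalIntegrable (by fun_prop) _ _),
    mul_sub, ← integral_const_mul, integral_sqrt_two_mul_inv_one_add_mul_sqrt, hsum]
  rfl

lemma abs_Mdiag_le (N : ℕ) :
    |Mdiag N| ≤ √2 * (scaledCentralBinom ((N + 1) / 2) + 1 / (N + 1)) := by
  rw [Mdiag_eq_integral, abs_mul, abs_of_nonneg (sqrt_nonneg 2)]
  gcongr
  refine (abs_integral_le_integral_abs zero_le_one).trans ?_
  have hcont (f : ℝ → ℝ) (hf : Continuous f) : IntervalIntegrable f MeasureTheory.volume 0 1 :=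
    hf.intervalIntegrable 0 1
  refine (integral_mono_on_of_le_Ioo zero_le_one ?_ (hcont _ (by fun_prop))
    fun x hx => abs_inv_one_add_mul_sqrt_sub_sum_le hx.1.le hx.2 N).trans_eq ?_
  · exact (intervalIntegrable_inv_one_add_mul_sqrt.sub (hcont _ (by fun_prop))).abs
  · rw [integral_add (hcont _ (by fun_prop)) (hcont _ (by fun_prop)), integral_pow]
    simp

theorem Mdiag_tendsto_zero : Tendsto Mdiag atTop (nhds 0) := by
  refine squeeze_zero_norm abs_Mdiag_le ?_
  have hK : Tendsto (fun N : ℕ => (N + 1) / 2) atTop atTop :=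
    (Nat.tendsto_div_const_atTop two_ne_zero).comp (tendsto_add_atTop_nat 1)
  simpa using ((tendsto_scaledCentralBinom_atTop_zero.comp hK).add
    tendsto_one_div_add_atTop_nhds_zero_nat).const_mul √2
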